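/- arXiv:2304.08335 — 3 statements merged into one kernel-verified Lean document; each statement's English description precedes it below -/
import Mathlib

section
/- Let B > 1, m ≥ 1, and let real numbers a < b ≤ 0 be given. Let (P_i^{(t)}), for 1 ≤ i ≤ m and t ≥ 1, be i.i.d. random variables valued in (0,1) such that log_B P_i^{(t)} is uniformly distributed on (a,b). Fix initial side lengths P_i^{(0)} > 0 and set S_i^{(n)} = ∏_{t=0}^n P_i^{(t)}. Then the frame perimeters V_1^{(n)} = 2^{m−1} · Σ_{i=1}^m S_i^{(n)} converge to strong Benford behavior base B as n → ∞. -/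
/-!
Put `X i t = log_B P_i^{(t)}` and `Y_n = (∑_{t<n} X i t)_i`. Then `log_B V_1^{(n)} = h (Y_n)` with
`h y = log_B (∑ i, 2^{m-1} P_i^{(0)} B^{y_i})`, and `h (y + s • 𝟙) = h y + s`; the significand of
`V_1^{(n)}` is at most `D` iff `frac (h Y_n) ≤ log_B D`. So it suffices that `frac (h Y_n)` becomes
uniform on `[0, 1)`.

Fix `K` with `1/K < b - a`. The increment of `Y` over `K` steps is the row sum of an `m × K` block of
i.i.d. uniforms on `(a, b)`, and a fixed fraction `ε > 0` of its law is the law of the row sum of a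
block uniform on `(a, b - 1/K)` whose entries are all shifted by the same `s/K`, `s` uniform on
`[0, 1)`. That part moves `Y` by `s • 𝟙` and hence `h Y` by `s`, which makes `frac (h Y)` exactly
uniform whatever happened before. Peeling off one block at a time gives
`|P(frac (h Y_n) ∈ A) - λ(A ∩ [0, 1))| ≤ (1 - ε)^⌊n/K⌋`.
-/

open MeasureTheory ProbabilityTheory Filter

/-- The significand of `x` in base `B`: the unique element of `[1, B)` of the form
`x / B ^ k` for an integer `k` (for `x > 0`, `B > 1`). -/
noncomputable def significand (B x : ℝ) : ℝ := B ^ (Int.fract (Real.logb B x))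

/-- A sequence of (positive) random variables converges to strong Benford behavior in
base `B` if for all `D ∈ [1, B]` the probability that the significand is at most `D`
tends to `log_B D`. -/
def StrongBenford {Ω : Type*} [MeasurableSpace Ω] (μ : Measure Ω) (B : ℝ)
    (X : ℕ → Ω → ℝ) : Prop :=
  ∀ D ∈ Set.Icc 1 B,
    Tendsto (fun n => (μ {ω | significand B (X n ω) ≤ D}).toReal)
      atTop (nhds (Real.logb B D))

open Set
open scoped ENNReal Topology

instance : IsProbabilityMeasure (volume.restrict (Ico (0 : ℝ) 1)) := ⟨by simp⟩

lemma isProbabilityMeasure_cond_Ioo {a b : ℝ} (hab : a < b) :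
    IsProbabilityMeasure (volume[|Ioo a b]) :=
  cond_isProbabilityMeasure_of_finite (by simpa using hab) (by simp)

@[fun_prop]
lemma Real.measurable_logb (B : ℝ) : Measurable (Real.logb B) :=
  Real.measurable_log.div_const _

lemma map_fract_const_add (c : ℝ) :
    (volume.restrict (Ico (0 : ℝ) 1)).map (fun s => Int.fract (c + s)) =
      volume.restrict (Ico 0 1) := by
  have hcircle (c : ℝ) : (volume.restrict (Ico (0 : ℝ) 1)).map (fun s => Int.fract (c + s)) =
      (volume : Measure (AddCircle (1 : ℝ))).map fun z => (AddCircle.equivIco 1 0 z : ℝ) := by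
    have hfract : (fun s : ℝ => Int.fract (c + s)) =
        (fun z => (AddCircle.equivIco 1 0 z : ℝ)) ∘ (fun z => (c : AddCircle (1 : ℝ)) + z) ∘
          ((↑) : ℝ → AddCircle (1 : ℝ)) := by
      ext s
      simp [AddCircle.coe_equivIco_mk_apply, ← QuotientAddGroup.mk_add]
    have hIco : Measurable fun z : AddCircle (1 : ℝ) => (AddCircle.equivIco 1 0 z : ℝ) :=
      measurable_subtype_coe.comp (AddCircle.measurableEquivIco 1 0).measurable
    rw [Measure.restrict_congr_set Ico_ae_eq_Ioc, hfract,
      ← Measure.map_map hIco ((measurable_const_add _).comp AddCircle.measurable_mk'),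
      ← Measure.map_map (measurable_const_add _) AddCircle.measurable_mk',
      show Ioc (0 : ℝ) 1 = Ioc 0 (0 + 1) by norm_num,
      (AddCircle.measurePreserving_mk 1 0).map_eq, map_add_left_eq_self]
  rw [hcircle, ← hcircle 0]
  conv_rhs => rw [← Measure.map_id (μ := volume.restrict (Ico (0 : ℝ) 1))]
  refine Measure.map_congr ?_
  filter_upwards [ae_restrict_mem measurableSet_Ico] with s hs
  simpa using Int.fract_eq_self.2 hs

lemma lintegral_measure_fract_add_mem {X : Type*} [MeasurableSpace X] (ν : Measure X)
    [IsProbabilityMeasure ν] {c : X → ℝ} (hc : Measurable c) {A : Set ℝ}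
    (hA : MeasurableSet A) :
    ∫⁻ s in Ico 0 1, ν {x | Int.fract (c x + s) ∈ A} = volume.restrict (Ico (0 : ℝ) 1) A := by
  have hT : MeasurableSet {p : ℝ × X | Int.fract (c p.2 + p.1) ∈ A} :=
    ((hc.comp measurable_snd).add measurable_fst).fract hA
  have hfract (x : X) : volume.restrict (Ico (0 : ℝ) 1) {s | Int.fract (c x + s) ∈ A} =
      volume.restrict (Ico (0 : ℝ) 1) A := by
    conv_rhs => rw [← map_fract_const_add (c x)]
    exact (Measure.map_apply (measurable_const_add _).fract hA).symm
  calc ∫⁻ s in Ico 0 1, ν {x | Int.fract (c x + s) ∈ A}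
      = ((volume.restrict (Ico (0 : ℝ) 1)).prod ν) {p | Int.fract (c p.2 + p.1) ∈ A} :=
        (Measure.prod_apply hT).symm
    _ = ∫⁻ x, volume.restrict (Ico (0 : ℝ) 1) {s | Int.fract (c x + s) ∈ A} ∂ν :=
        Measure.prod_apply_symm hT
    _ = volume.restrict (Ico (0 : ℝ) 1) A := by simp [hfract]

lemma map_add_prod_restrict_le {G S : Type*} [AddGroup G] [MeasurableSpace G]
    [MeasurableAdd₂ G] [MeasurableSpace S] (W : Measure G) [W.IsAddRightInvariant] [SFinite W]
    (U : Measure S) [IsProbabilityMeasure U] {C C' : Set G} {φ : S → G} (hφ : Measurable φ)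
    (hC : ∀ᵐ s ∂U, ∀ g ∈ C', g + φ s ∈ C) :
    ((W.restrict C').prod U).map (fun p => p.1 + φ p.2) ≤ W.restrict C := by
  refine Measure.le_iff.2 fun A hA => ?_
  have hmeas : Measurable fun p : G × S => p.1 + φ p.2 :=
    measurable_fst.add (hφ.comp measurable_snd)
  rw [Measure.map_apply hmeas hA, Measure.prod_apply_symm (hmeas hA)]
  calc ∫⁻ s, W.restrict C' ((fun g => (g, s)) ⁻¹' ((fun p => p.1 + φ p.2) ⁻¹' A)) ∂U
      ≤ ∫⁻ _, W.restrict C A ∂U := by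
        refine lintegral_mono_ae (hC.mono fun s hs => ?_)
        change W.restrict C' ((· + φ s) ⁻¹' A) ≤ _
        rw [Measure.restrict_apply (measurable_add_const (φ s) hA), Measure.restrict_apply hA,
          ← measure_preimage_add_right W (φ s) (A ∩ C)]
        exact measure_mono fun g hg => ⟨hg.1, hs g hg.2⟩
    _ = W.restrict C A := by rw [lintegral_const, measure_univ, mul_one]

lemma map_add_prod_cond_le {G S : Type*} [AddGroup G] [MeasurableSpace G]
    [MeasurableAdd₂ G] [MeasurableSpace S] (W : Measure G) [W.IsAddRightInvariant] [SFinite W]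
    (U : Measure S) [IsProbabilityMeasure U] {C C' : Set G} {φ : S → G} (hφ : Measurable φ)
    (hC : ∀ᵐ s ∂U, ∀ g ∈ C', g + φ s ∈ C) (h0 : W C' ≠ 0) (htop : W C' ≠ ∞) :
    (W C' / W C) • ((W[|C']).prod U).map (fun p => p.1 + φ p.2) ≤ W[|C] := by
  rw [ProbabilityTheory.cond, ProbabilityTheory.cond, Measure.prod_smul_left, Measure.map_smul,
    smul_smul, div_eq_mul_inv, mul_right_comm, ENNReal.mul_inv_cancel h0 htop, one_mul]
  gcongr
  exact map_add_prod_restrict_le W U hφ hC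

lemma MeasureTheory.Measure.pi_cond {ι : Type*} [Fintype ι] {X : ι → Type*}
    [∀ i, MeasurableSpace (X i)] (μ : ∀ i, Measure (X i)) [∀ i, SigmaFinite (μ i)]
    {s : ∀ i, Set (X i)} (hs : ∀ i, MeasurableSet (s i)) (hfin : ∀ i, μ i (s i) ≠ ∞) :
    Measure.pi (fun i => (μ i)[|s i]) = (Measure.pi μ)[|univ.pi s] := by
  refine Measure.pi_eq (μ := fun i => (μ i)[|s i]) fun t _ => ?_
  rw [cond_apply (MeasurableSet.univ_pi hs), ← pi_inter_distrib, Measure.pi_pi μ,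
    Measure.pi_pi μ, ENNReal.prod_inv_distrib fun i _ j _ _ => Or.inr (hfin j),
    ← Finset.prod_mul_distrib]
  exact Finset.prod_congr rfl fun i _ => (cond_apply (hs i) _ _).symm

lemma ProbabilityTheory.IndepFun.measure_add_mem {Ω E : Type*} [MeasurableSpace Ω]
    {μ : Measure Ω} [IsProbabilityMeasure μ] [AddCommGroup E] [MeasurableSpace E]
    [MeasurableAdd₂ E] {Y Z : Ω → E} (hY : Measurable Y) (hZ : Measurable Z)
    (hYZ : IndepFun Y Z μ) {S : Set E} (hS : MeasurableSet S) :
    μ {ω | Y ω + Z ω ∈ S} = ∫⁻ z, μ {ω | Y ω + z ∈ S} ∂(μ.map Z) := by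
  have hS' : MeasurableSet {p : E × E | p.1 + p.2 ∈ S} := measurable_add hS
  calc μ {ω | Y ω + Z ω ∈ S} = (μ.map fun ω => (Y ω, Z ω)) {p | p.1 + p.2 ∈ S} :=
        (Measure.map_apply (hY.prodMk hZ) hS').symm
    _ = _ := by
      rw [(indepFun_iff_map_prod_eq_prod_map_map hY.aemeasurable hZ.aemeasurable).1 hYZ,
        Measure.prod_apply_symm hS']
      exact lintegral_congr fun z => Measure.map_apply hY (measurable_add_const z hS)

lemma abs_measureReal_sub_le {α : Type*} [MeasurableSpace α] {P Q : Measure α}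
    [IsProbabilityMeasure P] [IsProbabilityMeasure Q] {c : ℝ}
    (h : ∀ A, MeasurableSet A → Q.real A ≤ P.real A + c) {A : Set α} (hA : MeasurableSet A) :
    |P.real A - Q.real A| ≤ c := by
  have hc := h Aᶜ hA.compl
  rw [probReal_compl_eq_one_sub hA, probReal_compl_eq_one_sub hA] at hc
  exact abs_le.2 ⟨by linarith [h A hA], by linarith⟩

/-- Write `β = (β - ε • γ) + ε • γ`: the `γ`-part of every `K`-step transition lands exactly on
`L`, so the defect `L - f n y` shrinks by the factor `1 - ε` every `K` steps. -/
theorem le_add_pow_mul_of_minorization {E : Type*} [MeasurableSpace E] [Add E]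
    {β γ : Measure E} [IsProbabilityMeasure β] [IsProbabilityMeasure γ] {ε : ℝ≥0∞}
    (hβγ : ε • γ ≤ β) {K : ℕ} (hK : 0 < K) {L : ℝ≥0∞} (f : ℕ → E → ℝ≥0∞)
    (hstep : ∀ n y, f (n + K) y = ∫⁻ z, f n (y + z) ∂β)
    (hγ : ∀ n y, ∫⁻ z, f n (y + z) ∂γ = L) (n : ℕ) (y : E) :
    L ≤ f n y + (1 - ε) ^ (n / K) * L := by
  have hε : ε ≤ 1 := by simpa using hβγ univ
  have : IsFiniteMeasure (ε • γ) := ⟨by simpa using hε.trans_lt ENNReal.one_lt_top⟩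
  have hrest : (β - ε • γ) univ = 1 - ε := by
    simp [Measure.sub_apply MeasurableSet.univ hβγ]
  induction n using Nat.strong_induction_on generalizing y with
  | _ n ih =>
    obtain hn | ⟨n, rfl⟩ : n < K ∨ ∃ n', n = n' + K :=
      (lt_or_ge n K).imp_right fun h => ⟨n - K, by omega⟩
    · simp [Nat.div_eq_of_lt hn]
    have hsplit : ∫⁻ z, f n (y + z) ∂β = ∫⁻ z, f n (y + z) ∂(β - ε • γ) + ε * L := by
      conv_lhs => rw [← Measure.sub_add_cancel_of_le hβγ]
      rw [lintegral_add_measure, lintegral_smul_measure, hγ, smul_eq_mul]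
    calc L = (1 - ε) * L + ε * L := by rw [← add_mul, tsub_add_cancel_of_le hε, one_mul]
      _ ≤ ∫⁻ z, (f n (y + z) + (1 - ε) ^ (n / K) * L) ∂(β - ε • γ) + ε * L := by
        gcongr
        calc (1 - ε) * L = ∫⁻ _, L ∂(β - ε • γ) := by rw [lintegral_const, hrest, mul_comm]
          _ ≤ _ := lintegral_mono fun z => ih n (by omega) (y + z)
      _ = f (n + K) y + (1 - ε) ^ ((n + K) / K) * L := by
        rw [lintegral_add_right _ measurable_const, lintegral_const, hrest, hstep, hsplit,
          Nat.add_div_right n hK, pow_succ]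
        ring

noncomputable def diagonalSmear {ι T : Type*} [MeasurableSpace T] (γ : Measure T)
    (φ : T → ι → ℝ) : Measure (ι → ℝ) :=
  (γ.prod (volume.restrict (Ico (0 : ℝ) 1))).map fun p => φ p.1 + fun _ => p.2

lemma isProbabilityMeasure_diagonalSmear {ι T : Type*} [Countable ι] [MeasurableSpace T]
    {γ : Measure T} [IsProbabilityMeasure γ] {φ : T → ι → ℝ} (hφ : Measurable φ) :
    IsProbabilityMeasure (diagonalSmear γ φ) :=
  Measure.isProbabilityMeasure_map
    ((hφ.comp measurable_fst).add (measurable_pi_lambda _ fun _ => measurable_snd)).aemeasurable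

lemma lintegral_diagonalSmear_measure_fract_mem {Ω ι T : Type*} [MeasurableSpace Ω]
    [Countable ι] [MeasurableSpace T] (μ : Measure Ω) [IsProbabilityMeasure μ] (γ : Measure T)
    [IsProbabilityMeasure γ] {h : (ι → ℝ) → ℝ} (hh : Measurable h)
    (hshift : ∀ x s, h (x + fun _ => s) = h x + s) {Y : Ω → ι → ℝ} (hY : Measurable Y)
    {φ : T → ι → ℝ} (hφ : Measurable φ) {A : Set ℝ} (hA : MeasurableSet A) (y : ι → ℝ) :
    ∫⁻ z, μ {ω | Int.fract (h (y + z + Y ω)) ∈ A} ∂(diagonalSmear γ φ) =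
      volume.restrict (Ico (0 : ℝ) 1) A := by
  have hmeas : Measurable fun z => μ {ω | Int.fract (h (y + z + Y ω)) ∈ A} :=
    measurable_measure_prodMk_left
      ((hh.comp ((measurable_const.add measurable_fst).add (hY.comp measurable_snd))).fract hA)
  have hdiag : Measurable fun p : T × ℝ => φ p.1 + fun _ => p.2 :=
    (hφ.comp measurable_fst).add (measurable_pi_lambda _ fun _ => measurable_snd)
  have hinner (g : T) :
      ∫⁻ s in Ico 0 1, μ {ω | Int.fract (h (y + (φ g + fun _ => s) + Y ω)) ∈ A} =
        volume.restrict (Ico (0 : ℝ) 1) A := by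
    have hrw (s : ℝ) (ω : Ω) : h (y + (φ g + fun _ => s) + Y ω) = h (y + φ g + Y ω) + s := by
      rw [← hshift]
      congr 1
      abel
    simp_rw [hrw]
    exact lintegral_measure_fract_add_mem μ (hh.comp (measurable_const.add hY)) hA
  rw [diagonalSmear, lintegral_map hmeas hdiag]
  refine (lintegral_prod _ (hmeas.comp hdiag).aemeasurable).trans ?_
  simp [hinner]

def rowSum {ι κ : Type*} [Fintype κ] (x : ι × κ → ℝ) : ι → ℝ := fun i => ∑ t, x (i, t)

@[fun_prop]
lemma measurable_rowSum {ι κ : Type*} [Fintype κ] :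
    Measurable (rowSum : (ι × κ → ℝ) → ι → ℝ) :=
  measurable_pi_lambda _ fun _ => Finset.measurable_sum _ fun _ _ => measurable_pi_apply _

/-- Adding the same `s / K`, `s ∈ [0, 1)`, to all entries of an `ι × Fin K` block shifts every
row sum by `s`; on the shrunken cube `(a, b - 1/K)` this stays inside `(a, b)`. -/
lemma exists_smul_diagonalSmear_le_map_rowSum {ι : Type*} [Fintype ι] {K : ℕ} (hK : 0 < K)
    {a b : ℝ} (hab : a < b - (K : ℝ)⁻¹) :
    ∃ ε : ℝ≥0∞, ε ≠ 0 ∧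
      ε • diagonalSmear (Measure.pi fun _ : ι × Fin K => volume[|Ioo a (b - (K : ℝ)⁻¹)])
          rowSum ≤
        (Measure.pi fun _ : ι × Fin K => volume[|Ioo a b]).map rowSum := by
  have hKpos : (0 : ℝ) < K := Nat.cast_pos.2 hK
  set C' : Set (ι × Fin K → ℝ) := univ.pi fun _ => Ioo a (b - (K : ℝ)⁻¹)
  set C : Set (ι × Fin K → ℝ) := univ.pi fun _ => Ioo a b
  set φ : ℝ → ι × Fin K → ℝ := fun s _ => s / K
  have hφ : Measurable φ := measurable_pi_lambda _ fun _ => measurable_id.div_const _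
  have hrow (g : ι × Fin K → ℝ) (s : ℝ) : rowSum (g + φ s) = rowSum g + fun _ => s := by
    ext i
    simp [rowSum, φ, Finset.sum_add_distrib, mul_div_cancel₀ _ hKpos.ne']
  have hC : ∀ᵐ s ∂volume.restrict (Ico (0 : ℝ) 1), ∀ g ∈ C', g + φ s ∈ C := by
    filter_upwards [ae_restrict_mem measurableSet_Ico] with s hs g hg q _
    have hsK : s / K < (K : ℝ)⁻¹ := by
      rw [div_lt_iff₀ hKpos, inv_mul_cancel₀ hKpos.ne']
      exact hs.2
    have := hg q (mem_univ q)
    simp only [mem_Ioo, Pi.add_apply, φ] at this ⊢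
    constructor <;> nlinarith [div_nonneg hs.1 hKpos.le]
  have h0 : volume C' ≠ 0 := by
    simp only [C', volume_pi_pi, Real.volume_Ioo, Finset.prod_ne_zero_iff, ne_eq,
      ENNReal.ofReal_eq_zero, not_le]
    exact fun _ _ => by linarith
  have htop : volume C' ≠ ∞ := by simp [C', volume_pi_pi]
  refine ⟨volume C' / volume C, ENNReal.div_ne_zero.2 ⟨h0, by simp [C, volume_pi_pi]⟩, ?_⟩
  have hshear : Measurable fun p : (ι × Fin K → ℝ) × ℝ => p.1 + φ p.2 := by fun_prop
  have hcomp : (fun p : (ι × Fin K → ℝ) × ℝ => rowSum p.1 + fun _ => p.2) =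
      rowSum ∘ fun p => p.1 + φ p.2 := funext fun p => (hrow p.1 p.2).symm
  rw [diagonalSmear, Measure.pi_cond _ (fun _ => measurableSet_Ioo) fun _ => measure_Ioo_lt_top.ne,
    Measure.pi_cond _ (fun _ => measurableSet_Ioo) fun _ => measure_Ioo_lt_top.ne, ← volume_pi,
    hcomp, ← Measure.map_map measurable_rowSum hshear, ← Measure.map_smul]
  exact Measure.map_mono (map_add_prod_cond_le volume _ hφ hC h0 htop) measurable_rowSum

lemma measurable_sum_range {Ω ι : Type*} [MeasurableSpace Ω] {X : ι × ℕ → Ω → ℝ}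
    (hX : ∀ p, Measurable (X p)) (n : ℕ) :
    Measurable fun ω i => ∑ t ∈ Finset.range n, X (i, t) ω :=
  measurable_pi_lambda _ fun _ => Finset.measurable_sum _ fun _ _ => hX _

section IIDArray

variable {Ω ι : Type*} [MeasurableSpace Ω] [Fintype ι] {μ : Measure Ω} {X : ι × ℕ → Ω → ℝ}

lemma ProbabilityTheory.iIndepFun.indepFun_sum_range_rowSum (hX : ∀ p, Measurable (X p))
    (hindep : iIndepFun X μ) (n K : ℕ) :
    IndepFun (fun ω i => ∑ t ∈ Finset.range n, X (i, t) ω)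
      (fun ω => rowSum fun q : ι × Fin K => X (q.1, n + q.2) ω) μ := by
  classical
  let S : Finset (ι × ℕ) := Finset.univ ×ˢ Finset.range n
  let T : Finset (ι × ℕ) := Finset.univ ×ˢ Finset.Ico n (n + K)
  have hST : Disjoint S T := by
    simp only [S, T, Finset.disjoint_left, Finset.mem_product, Finset.mem_range, Finset.mem_Ico]
    omega
  have h := (hindep.indepFun_finset S T hST hX).comp
    (φ := fun x => rowSum fun q : ι × Fin n => x ⟨(q.1, q.2), by simp [S]⟩)
    (ψ := fun x => rowSum fun q : ι × Fin K => x ⟨(q.1, n + q.2), by simp [T]⟩)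
    (measurable_rowSum.comp (measurable_pi_lambda _ fun _ => measurable_pi_apply _))
    (measurable_rowSum.comp (measurable_pi_lambda _ fun _ => measurable_pi_apply _))
  convert h using 1
  · ext ω i
    simp [rowSum, Fin.sum_univ_eq_sum_range (fun t => X (i, t) ω)]
  · rfl

lemma ProbabilityTheory.iIndepFun.map_block_eq_pi [IsProbabilityMeasure μ]
    (hX : ∀ p, Measurable (X p)) (hindep : iIndepFun X μ) {ν : Measure ℝ}
    (hν : ∀ p, μ.map (X p) = ν) (n K : ℕ) :
    μ.map (fun ω (q : ι × Fin K) => X (q.1, n + q.2) ω) = Measure.pi fun _ => ν := by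
  have hinj : Function.Injective fun q : ι × Fin K => (q.1, n + (q.2 : ℕ)) := by
    intro q q' h
    simp only [Prod.mk.injEq, add_right_inj] at h
    exact Prod.ext h.1 (Fin.ext h.2)
  rw [(hindep.precomp hinj).map_fun_eq_pi_map fun q => (hX _).aemeasurable]
  simp [hν]

lemma ProbabilityTheory.iIndepFun.measure_sum_range_add_mem [IsProbabilityMeasure μ]
    (hX : ∀ p, Measurable (X p)) (hindep : iIndepFun X μ) {ν : Measure ℝ}
    (hν : ∀ p, μ.map (X p) = ν) (n K : ℕ) {S : Set (ι → ℝ)} (hS : MeasurableSet S) :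
    μ {ω | (fun i => ∑ t ∈ Finset.range (n + K), X (i, t) ω) ∈ S} =
      ∫⁻ z, μ {ω | z + (fun i => ∑ t ∈ Finset.range n, X (i, t) ω) ∈ S}
        ∂(Measure.pi fun _ : ι × Fin K => ν).map rowSum := by
  set Y : Ω → ι → ℝ := fun ω i => ∑ t ∈ Finset.range n, X (i, t) ω
  set Z : Ω → ι → ℝ := fun ω => rowSum fun q : ι × Fin K => X (q.1, n + q.2) ω
  have hblock : Measurable fun ω (q : ι × Fin K) => X (q.1, n + q.2) ω :=
    measurable_pi_lambda _ fun _ => hX _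
  have hsplit (ω : Ω) : (fun i => ∑ t ∈ Finset.range (n + K), X (i, t) ω) = Y ω + Z ω := by
    ext i
    simp [Y, Z, rowSum, Finset.sum_range_add, Fin.sum_univ_eq_sum_range (fun t => X (i, n + t) ω)]
  have hlaw : μ.map Z = (Measure.pi fun _ : ι × Fin K => ν).map rowSum := by
    rw [← hindep.map_block_eq_pi hX hν n K, Measure.map_map measurable_rowSum hblock]
    rfl
  have hZ : Measurable Z := measurable_rowSum.comp hblock
  simp only [hsplit, ← hlaw]
  rw [IndepFun.measure_add_mem (measurable_sum_range hX n) hZ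
    (hindep.indepFun_sum_range_rowSum hX n K) hS]
  simp only [add_comm]

theorem exists_le_measure_fract_mem_add_pow_mul [IsProbabilityMeasure μ] {a b : ℝ} (hab : a < b)
    (hX : ∀ p, Measurable (X p)) (hindep : iIndepFun X μ)
    (hunif : ∀ p, μ.map (X p) = volume[|Ioo a b]) {h : (ι → ℝ) → ℝ} (hh : Measurable h)
    (hshift : ∀ x s, h (x + fun _ => s) = h x + s) :
    ∃ K > 0, ∃ ε ≠ 0, ∀ A, MeasurableSet A → ∀ n,
      volume.restrict (Ico (0 : ℝ) 1) A ≤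
        μ {ω | Int.fract (h fun i => ∑ t ∈ Finset.range n, X (i, t) ω) ∈ A} +
          (1 - ε) ^ (n / K) * volume.restrict (Ico (0 : ℝ) 1) A := by
  obtain ⟨K, hK, hKab⟩ : ∃ K : ℕ, 0 < K ∧ a < b - (K : ℝ)⁻¹ := by
    refine ⟨⌊(b - a)⁻¹⌋₊ + 1, Nat.succ_pos _, ?_⟩
    have := inv_lt_of_inv_lt₀ (sub_pos.2 hab) (by exact_mod_cast Nat.lt_floor_add_one (b - a)⁻¹)
    linarith
  have := isProbabilityMeasure_cond_Ioo hab
  have := isProbabilityMeasure_cond_Ioo hKab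
  have := isProbabilityMeasure_diagonalSmear (γ := Measure.pi fun _ : ι × Fin K =>
    volume[|Ioo a (b - (K : ℝ)⁻¹)]) measurable_rowSum
  have : IsProbabilityMeasure ((Measure.pi fun _ : ι × Fin K => volume[|Ioo a b]).map rowSum) :=
    Measure.isProbabilityMeasure_map measurable_rowSum.aemeasurable
  obtain ⟨ε, hε, hmin⟩ := exists_smul_diagonalSmear_le_map_rowSum (ι := ι) hK hKab
  refine ⟨K, hK, ε, hε, fun A hA n => ?_⟩
  simpa using le_add_pow_mul_of_minorization hmin hK
    (fun n y => μ {ω | Int.fract (h (y + fun i => ∑ t ∈ Finset.range n, X (i, t) ω)) ∈ A})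
    (fun n y => by
      simp only [add_assoc]
      exact hindep.measure_sum_range_add_mem hX hunif n K (S := {x | Int.fract (h (y + x)) ∈ A})
        ((hh.comp (measurable_const_add y)).fract hA))
    (fun n y => lintegral_diagonalSmear_measure_fract_mem μ _ hh hshift
      (measurable_sum_range hX n) measurable_rowSum hA y) n 0

theorem tendsto_measureReal_fract_mem [IsProbabilityMeasure μ] {a b : ℝ} (hab : a < b)
    (hX : ∀ p, Measurable (X p)) (hindep : iIndepFun X μ)
    (hunif : ∀ p, μ.map (X p) = volume[|Ioo a b]) {h : (ι → ℝ) → ℝ} (hh : Measurable h)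
    (hshift : ∀ x s, h (x + fun _ => s) = h x + s) {A : Set ℝ} (hA : MeasurableSet A) :
    Tendsto (fun n => μ.real {ω | Int.fract (h fun i => ∑ t ∈ Finset.range n, X (i, t) ω) ∈ A})
      atTop (𝓝 ((volume.restrict (Ico (0 : ℝ) 1)).real A)) := by
  obtain ⟨K, hK, ε, hε, hbound⟩ :=
    exists_le_measure_fract_mem_add_pow_mul hab hX hindep hunif hh hshift
  set F : ℕ → Ω → ℝ := fun n ω => Int.fract (h fun i => ∑ t ∈ Finset.range n, X (i, t) ω)
  have hF (n : ℕ) : Measurable (F n) := (hh.comp (measurable_sum_range hX n)).fract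
  have hdist (n : ℕ) : |μ.real (F n ⁻¹' A) - (volume.restrict (Ico (0 : ℝ) 1)).real A| ≤
      ((1 - ε) ^ (n / K)).toReal := by
    have : IsProbabilityMeasure (μ.map (F n)) :=
      Measure.isProbabilityMeasure_map (hF n).aemeasurable
    rw [← map_measureReal_apply (hF n) hA]
    refine abs_measureReal_sub_le (fun A' hA' => ?_) hA
    rw [map_measureReal_apply (hF n) hA']
    have h1 : volume.restrict (Ico (0 : ℝ) 1) A' ≤ μ (F n ⁻¹' A') + (1 - ε) ^ (n / K) :=
      calc volume.restrict (Ico (0 : ℝ) 1) A'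
          ≤ μ (F n ⁻¹' A') + (1 - ε) ^ (n / K) * volume.restrict (Ico (0 : ℝ) 1) A' :=
            hbound A' hA' n
        _ ≤ μ (F n ⁻¹' A') + (1 - ε) ^ (n / K) := by
            gcongr
            exact mul_le_of_le_one_right' prob_le_one
    simpa [measureReal_def, ENNReal.toReal_add, measure_ne_top, ENNReal.pow_ne_top,
      ENNReal.sub_ne_top] using ENNReal.toReal_mono (by finiteness) h1
  have hr : (1 - ε).toReal < 1 := by
    rw [← ENNReal.toReal_one]
    exact (ENNReal.toReal_lt_toReal (by finiteness) ENNReal.one_ne_top).2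
      (ENNReal.sub_lt_self ENNReal.one_ne_top one_ne_zero hε)
  have hlim : Tendsto (fun n => ((1 - ε) ^ (n / K)).toReal) atTop (𝓝 0) := by
    simp_rw [ENNReal.toReal_pow]
    exact (tendsto_pow_atTop_nhds_zero_of_lt_one ENNReal.toReal_nonneg hr).comp
      (map_div_atTop_eq_nat K hK).le
  exact tendsto_iff_norm_sub_tendsto_zero.2 (squeeze_zero (fun _ => norm_nonneg _) hdist hlim)

end IIDArray

lemma logb_sum_mul_rpow_add {ι : Type*} [Fintype ι] [Nonempty ι] {B : ℝ} (hB : 1 < B)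
    {w : ι → ℝ} (hw : ∀ i, 0 < w i) (x : ι → ℝ) (s : ℝ) :
    Real.logb B (∑ i, w i * B ^ (x i + s)) = Real.logb B (∑ i, w i * B ^ x i) + s := by
  have hB0 : 0 < B := by linarith
  have hpos : 0 < ∑ i, w i * B ^ x i :=
    Finset.sum_pos (fun i _ => mul_pos (hw i) (Real.rpow_pos_of_pos hB0 _)) Finset.univ_nonempty
  simp_rw [Real.rpow_add hB0, ← mul_assoc, ← Finset.sum_mul]
  rw [Real.logb_mul hpos.ne' (Real.rpow_pos_of_pos hB0 s).ne', Real.logb_rpow hB0 hB.ne']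

lemma significand_le_iff {B D x : ℝ} (hB : 1 < B) (hD : 0 < D) :
    significand B x ≤ D ↔ Int.fract (Real.logb B x) ≤ Real.logb B D := by
  rw [significand, ← Real.rpow_le_rpow_left_iff hB (z := Real.logb B D),
    Real.rpow_logb (by linarith) hB.ne' hD]

lemma measureReal_restrict_Ico_Iic {u : ℝ} (hu : u ∈ Icc (0 : ℝ) 1) :
    (volume.restrict (Ico (0 : ℝ) 1)).real (Iic u) = u := by
  rw [measureReal_restrict_apply measurableSet_Iic]
  apply le_antisymm
  · calc volume.real (Iic u ∩ Ico 0 1) ≤ volume.real (Icc 0 u) :=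
          measureReal_mono (fun x hx => ⟨hx.2.1, hx.1⟩) measure_Icc_lt_top.ne
      _ = u := by simp [hu.1]
  · calc u = volume.real (Ico 0 u) := by simp [hu.1]
      _ ≤ volume.real (Iic u ∩ Ico 0 1) :=
          measureReal_mono (fun x hx => ⟨hx.2.le, hx.1, hx.2.trans_le hu.2⟩)
            ((measure_mono inter_subset_right).trans_lt measure_Ico_lt_top).ne

theorem benford_perimeter_loguniform_general
    {Ω : Type*} [MeasurableSpace Ω] (μ : Measure Ω) [IsProbabilityMeasure μ]
    (B : ℝ) (hB : 1 < B)
    (m : ℕ) (hm : 1 ≤ m)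
    (a b : ℝ) (hab : a < b)
    (P : Fin m → ℕ → Ω → ℝ)
    (hmeas : ∀ i t, Measurable (P i t))
    (hval : ∀ i t ω, P i t ω ∈ Set.Ioo (0 : ℝ) 1)
    (hindep : iIndepFun (fun p : Fin m × ℕ => P p.1 p.2) μ)
    (hunif : ∀ i t, μ.map (fun ω => Real.logb B (P i t ω)) =
      (ENNReal.ofReal (b - a))⁻¹ • volume.restrict (Set.Ioo a b))
    (P0 : Fin m → ℝ) (hP0 : ∀ i, 0 < P0 i)
    (S : ℕ → Fin m → Ω → ℝ)
    (hS : ∀ n i ω, S n i ω = P0 i * ∏ t ∈ Finset.range n, P i t ω) :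
    StrongBenford μ B (fun n ω => (2 : ℝ) ^ (m - 1) * ∑ i : Fin m, S n i ω) := by
  have hB0 : 0 < B := by linarith
  have : Nonempty (Fin m) := ⟨⟨0, hm⟩⟩
  set X : Fin m × ℕ → Ω → ℝ := fun p ω => Real.logb B (P p.1 p.2 ω)
  set w : Fin m → ℝ := fun i => 2 ^ (m - 1) * P0 i
  have hperimeter (n : ℕ) (ω : Ω) : (2 : ℝ) ^ (m - 1) * ∑ i, S n i ω =
      ∑ i, w i * B ^ (∑ t ∈ Finset.range n, X (i, t) ω) := by
    simp only [Finset.mul_sum, hS, w, X, Real.rpow_sum_of_pos hB0,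
      Real.rpow_logb hB0 hB.ne' (hval _ _ _).1, mul_assoc]
  intro D ⟨hD1, hDB⟩
  have hu : Real.logb B D ∈ Icc (0 : ℝ) 1 :=
    ⟨Real.logb_nonneg hB hD1,
      (Real.logb_le_logb_of_le hB (by linarith) hDB).trans_eq (Real.logb_self_eq_one hB)⟩
  have key := tendsto_measureReal_fract_mem hab (X := X) (fun _ => by fun_prop)
    (hindep.comp _ fun _ => Real.measurable_logb B)
    (fun p => (hunif p.1 p.2).trans (by rw [ProbabilityTheory.cond, Real.volume_Ioo]))
    (by fun_prop : Measurable fun y : Fin m → ℝ => Real.logb B (∑ i, w i * B ^ y i))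
    (logb_sum_mul_rpow_add hB fun i => mul_pos (by positivity) (hP0 i))
    (measurableSet_Iic (a := Real.logb B D))
  rw [measureReal_restrict_Ico_Iic hu] at key
  refine key.congr fun n => ?_
  simp only [hperimeter, significand_le_iff hB (by linarith : (0 : ℝ) < D)]
  rfl

/-- **Corollary 1.11**: for a linear-fragmentation process whose proportion cuts are
identically log-uniform base `B` (i.e. `log_B P_i^{(t)}` uniform on `(a,b)`, `a < b ≤ 0`),
the frame perimeters `V_1^{(n)} = 2^{m-1} Σ_{i=1}^m S_i^{(n)}` converge to strong
Benford behavior base `B`. -/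
theorem benford_perimeter_loguniform
    {Ω : Type*} [MeasurableSpace Ω] (μ : Measure Ω) [IsProbabilityMeasure μ]
    (B : ℝ) (hB : 1 < B)
    (m : ℕ) (hm : 1 ≤ m)
    (a b : ℝ) (hab : a < b) (hb : b ≤ 0)
    (P : Fin m → ℕ → Ω → ℝ)
    (hmeas : ∀ i t, Measurable (P i t))
    (hval : ∀ i t ω, P i t ω ∈ Set.Ioo (0 : ℝ) 1)
    (hindep : iIndepFun (fun p : Fin m × ℕ => P p.1 p.2) μ)
    (hunif : ∀ i t, μ.map (fun ω => Real.logb B (P i t ω)) =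
      (ENNReal.ofReal (b - a))⁻¹ • volume.restrict (Set.Ioo a b))
    (P0 : Fin m → ℝ) (hP0 : ∀ i, 0 < P0 i)
    (S : ℕ → Fin m → Ω → ℝ)
    (hS : ∀ n i ω, S n i ω = P0 i * ∏ t ∈ Finset.range n, P i t ω) :
    StrongBenford μ B (fun n ω => (2 : ℝ) ^ (m - 1) * ∑ i : Fin m, S n i ω) :=
  benford_perimeter_loguniform_general μ B hB m hm a b hab P hmeas hval hindep hunif P0 hP0 S hS
end

section
/- Let \widehat{f_n}(k) = (sinc(k√3/√n))^n, the characteristic function of the normalized sum Z^{(n)} = (U_1 + ⋯ + U_n)/√n of n i.i.d. Uniform(−√3, √3) random variables, and let φ(x) = (1/√(2π)) e^{−x²/2}. Then for every ε ∈ (0, 1/4) there exists a constant C > 0 such that for all n ≥ 1 and all real x, | (1/(2π)) ∫_{|k| ≤ n^ε} \widehat{f_n}(k) e^{−ikx} dk − φ(x) | ≤ C·n^{−1+4ε}. -/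
/-!
For `|k| ≤ n^ε` the argument `u = k√3/√n` is small. The Taylor bounds
`1 - u²/6 ≤ sinc u ≤ 1 - u²/6 + u⁴/120` and `1 - t ≤ e^{-t} ≤ 1 - t + t²/2` put `sinc u` within
`u⁴/72` of `e^{-u²/6}`, and both are at most `e^{-u²/12}`; so `|aⁿ - bⁿ| ≤ n |a - b| max(a, b)ⁿ⁻¹`
gives `|f̂_n(k) - e^{-k²/2}| ≤ e^{1/2} k⁴/(8n) e^{-k²/4}`, whose integral over `|k| ≤ n^ε` is
`O(n^{4ε-1})`. Since `φ(x) = (1/2π) ∫ e^{-k²/2} e^{-ikx} dk`, what remains is the Gaussian tail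
beyond `n^ε`, which is `O(e^{-n^{2ε}/4}) = O(1/n)`.
-/

open MeasureTheory Filter

/-- The (unnormalized) sinc function: `sinc u = sin u / u` for `u ≠ 0`, `sinc 0 = 1`. -/
noncomputable def sinc (u : ℝ) : ℝ := if u = 0 then 1 else Real.sin u / u

/-- The standard Gaussian density. -/
noncomputable def gaussDensity (x : ℝ) : ℝ :=
  (1 / Real.sqrt (2 * Real.pi)) * Real.exp (-x ^ 2 / 2)

open Real hiding sinc
open Complex (I)
open scoped Complex

theorem apply_zero_le_apply_of_hasDerivAt_nonneg {f f' : ℝ → ℝ}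
    (hf : ∀ v, HasDerivAt f (f' v) v) (hf' : ∀ v, 0 < v → 0 ≤ f' v) {u : ℝ} (hu : 0 ≤ u) :
    f 0 ≤ f u :=
  monotoneOn_of_hasDerivWithinAt_nonneg (convex_Ici 0)
    (fun v _ ↦ (hf v).continuousAt.continuousWithinAt) (fun v _ ↦ (hf v).hasDerivWithinAt)
    (fun v hv ↦ hf' v (by simpa using hv)) Set.self_mem_Ici hu hu

theorem cos_le_quartic {u : ℝ} (hu : 0 ≤ u) : cos u ≤ 1 - u ^ 2 / 2 + u ^ 4 / 24 := by
  have hderiv (v : ℝ) : HasDerivAt (fun v ↦ 1 - v ^ 2 / 2 + v ^ 4 / 24 - cos v)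
      (sin v - (v - v ^ 3 / 6)) v := by
    refine (((((hasDerivAt_pow 2 v).div_const 2).const_sub 1).add
      ((hasDerivAt_pow 4 v).div_const 24)).sub (hasDerivAt_cos v)).congr_deriv ?_
    push_cast
    ring
  have key := apply_zero_le_apply_of_hasDerivAt_nonneg hderiv
    (fun v hv ↦ sub_nonneg.2 (sin_ge_sub_cube hv.le)) hu
  norm_num at key
  linarith

theorem sin_le_quintic {u : ℝ} (hu : 0 ≤ u) : sin u ≤ u - u ^ 3 / 6 + u ^ 5 / 120 := by
  have hderiv (v : ℝ) : HasDerivAt (fun v ↦ v - v ^ 3 / 6 + v ^ 5 / 120 - sin v)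
      (1 - v ^ 2 / 2 + v ^ 4 / 24 - cos v) v := by
    refine ((((hasDerivAt_id v).sub ((hasDerivAt_pow 3 v).div_const 6)).add
      ((hasDerivAt_pow 5 v).div_const 120)).sub (hasDerivAt_sin v)).congr_deriv ?_
    push_cast
    ring
  have key := apply_zero_le_apply_of_hasDerivAt_nonneg hderiv
    (fun v hv ↦ sub_nonneg.2 (cos_le_quartic hv.le)) hu
  norm_num at key
  linarith

theorem sinc_abs (u : ℝ) : Real.sinc |u| = Real.sinc u := by
  rcases abs_choice u with h | h <;> rw [h]
  exact Real.sinc_neg u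

theorem one_sub_sq_div_six_le_sinc (u : ℝ) : 1 - u ^ 2 / 6 ≤ Real.sinc u := by
  rw [← sinc_abs, ← sq_abs]
  rcases (abs_nonneg u).eq_or_lt with h | h
  · simp [← h]
  · rw [Real.sinc_of_ne_zero h.ne', le_div_iff₀ h]
    nlinarith [sin_ge_sub_cube h.le]

theorem sinc_le_quartic (u : ℝ) : Real.sinc u ≤ 1 - u ^ 2 / 6 + u ^ 4 / 120 := by
  rw [← sinc_abs, ← sq_abs, ← (Even.pow_abs ⟨2, rfl⟩ u)]
  rcases (abs_nonneg u).eq_or_lt with h | h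
  · simp [← h]
  · rw [Real.sinc_of_ne_zero h.ne', div_le_iff₀ h]
    nlinarith [sin_le_quintic h.le]

theorem exp_neg_le_quadratic {t : ℝ} (ht : 0 ≤ t) : exp (-t) ≤ 1 - t + t ^ 2 / 2 := by
  -- `(1 - t + t²/2)(1 + t + t²/2) = 1 + t⁴/4 ≥ 1`
  have h := quadratic_le_exp_of_nonneg ht
  rw [exp_neg, inv_le_iff_one_le_mul₀ (exp_pos t)]
  nlinarith [pow_nonneg ht 4, sq_nonneg (t - 1)]

theorem abs_sinc_sub_exp_le (u : ℝ) : |Real.sinc u - exp (-(u ^ 2 / 6))| ≤ u ^ 4 / 72 := by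
  have hlow := one_sub_sq_div_six_le_sinc u
  have hup := sinc_le_quartic u
  have hexp_low : 1 - u ^ 2 / 6 ≤ exp (-(u ^ 2 / 6)) := by
    linarith [add_one_le_exp (-(u ^ 2 / 6))]
  have hexp_up := exp_neg_le_quadratic (t := u ^ 2 / 6) (by positivity)
  rw [abs_le]
  constructor <;> nlinarith [pow_nonneg (sq_nonneg u) 2]

theorem abs_sinc_le_exp {u : ℝ} (hu : u ^ 2 ≤ 6) : |Real.sinc u| ≤ exp (-(u ^ 2 / 12)) := by
  have hlow := one_sub_sq_div_six_le_sinc u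
  have hup := sinc_le_quartic u
  have hexp := add_one_le_exp (-(u ^ 2 / 12))
  rw [abs_of_nonneg (by linarith)]
  nlinarith [sq_nonneg u]

theorem abs_sinc_pow_sub_exp_pow_le {u : ℝ} (hu : u ^ 2 ≤ 6) (n : ℕ) :
    |Real.sinc u ^ n - exp (-(u ^ 2 / 6)) ^ n| ≤
      u ^ 4 / 72 * n * exp (-(u ^ 2 / 12)) ^ (n - 1) := by
  refine (abs_pow_sub_pow_le _ _ n).trans ?_
  gcongr
  · exact abs_sinc_sub_exp_le u
  · refine max_le (abs_sinc_le_exp hu) ?_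
    rw [abs_of_pos (exp_pos _), exp_le_exp]
    nlinarith [sq_nonneg u]

theorem abs_sinc_pow_sub_gaussian_le {n : ℕ} (hn : 0 < n) {T k : ℝ} (hT : T ^ 2 ≤ 2 * n)
    (hk : k ∈ Set.Icc (-T) T) :
    |sinc (k * √3 / √n) ^ n - exp (-(k ^ 2 / 2))| ≤
      exp (1 / 2) * T ^ 4 / (8 * n) * exp (-(k ^ 2 / 4)) := by
  have hn0 : (0 : ℝ) < n := by exact_mod_cast hn
  have hkT : k ^ 2 ≤ T ^ 2 := sq_le_sq' hk.1 hk.2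
  set u := k * √3 / √n
  have hu2 : u ^ 2 = 3 * k ^ 2 / n := by
    rw [div_pow, mul_pow, sq_sqrt (by norm_num), sq_sqrt hn0.le]
    ring
  have hu6 : u ^ 2 ≤ 6 := by
    rw [hu2, div_le_iff₀ hn0]
    linarith
  have hpow : exp (-(u ^ 2 / 6)) ^ n = exp (-(k ^ 2 / 2)) := by
    rw [← exp_nat_mul, hu2]
    congr 1
    field_simp
    ring
  have hdecay : exp (-(u ^ 2 / 12)) ^ (n - 1) ≤ exp (1 / 2) * exp (-(k ^ 2 / 4)) := by
    have hk' : k ^ 2 / (4 * n) ≤ 1 / 2 := by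
      rw [div_le_iff₀ (by positivity)]
      linarith
    have hexpand : ((n - 1 : ℕ) : ℝ) * -(u ^ 2 / 12) = -(k ^ 2 / 4) + k ^ 2 / (4 * n) := by
      rw [Nat.cast_sub hn, hu2]
      field_simp
      ring
    rw [← exp_nat_mul, ← exp_add, exp_le_exp, hexpand]
    linarith
  have hk4 : k ^ 4 ≤ T ^ 4 := by
    simpa only [← pow_mul] using pow_le_pow_left₀ (sq_nonneg k) hkT 2
  have hmain := abs_sinc_pow_sub_exp_pow_le hu6 n
  rw [hpow] at hmain
  calc _ ≤ u ^ 4 / 72 * n * exp (-(u ^ 2 / 12)) ^ (n - 1) := hmain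
    _ ≤ u ^ 4 / 72 * n * (exp (1 / 2) * exp (-(k ^ 2 / 4))) := by gcongr
    _ = exp (1 / 2) * k ^ 4 / (8 * n) * exp (-(k ^ 2 / 4)) := by
      rw [show u ^ 4 = (u ^ 2) ^ 2 by ring, hu2]
      field_simp
      ring
    _ ≤ _ := by gcongr

theorem exp_neg_sq_div_eq (c k : ℝ) : exp (-(k ^ 2 / c)) = exp (-c⁻¹ * k ^ 2) := by
  ring_nf

theorem integrable_exp_neg_sq_div {c : ℝ} (hc : 0 < c) :
    Integrable fun k : ℝ ↦ exp (-(k ^ 2 / c)) := by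
  simpa only [exp_neg_sq_div_eq] using integrable_exp_neg_mul_sq (inv_pos.2 hc)

theorem integral_exp_neg_sq_div (c : ℝ) : ∫ k : ℝ, exp (-(k ^ 2 / c)) = √(π * c) := by
  simp only [exp_neg_sq_div_eq, integral_gaussian, div_inv_eq_mul]

theorem integral_exp_neg_sq_div_four : ∫ k : ℝ, exp (-(k ^ 2 / 4)) = 2 * √π := by
  rw [integral_exp_neg_sq_div, sqrt_mul pi_nonneg, show (4 : ℝ) = 2 ^ 2 by norm_num,
    sqrt_sq zero_le_two, mul_comm]

theorem ofReal_gaussian_mul_cexp_eq (x k : ℝ) :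
    (exp (-(k ^ 2 / 2)) : ℂ) * cexp (-(I * k * x)) =
      cexp (I * (-x) * k) * cexp (-(1 / 2) * k ^ 2) := by
  rw [Complex.ofReal_exp, mul_comm]
  push_cast
  ring_nf

theorem integrable_gaussian_mul_cexp (x : ℝ) :
    Integrable fun k : ℝ ↦ (exp (-(k ^ 2 / 2)) : ℂ) * cexp (-(I * k * x)) := by
  refine (integrable_cexp_quadratic (b := 1 / 2) (by norm_num) (I * (-x)) 0).congr
    (ae_of_all _ fun k ↦ ?_)
  dsimp only
  rw [ofReal_gaussian_mul_cexp_eq, ← Complex.exp_add]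
  ring_nf

theorem gaussDensity_eq_integral (x : ℝ) :
    (gaussDensity x : ℂ) =
      1 / (2 * π) * ∫ k : ℝ, (exp (-(k ^ 2 / 2)) : ℂ) * cexp (-(I * k * x)) := by
  have hcpow : ((2 * π : ℝ) : ℂ) ^ (1 / 2 : ℂ) = (√(2 * π) : ℂ) := by
    rw [sqrt_eq_rpow, Complex.ofReal_cpow (by positivity)]
    norm_num
  have hdensity : gaussDensity x = 1 / (2 * π) * (√(2 * π) * exp (-x ^ 2 / 2)) := by
    have hsq : √(2 * π) ^ 2 = 2 * π := sq_sqrt (by positivity)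
    rw [gaussDensity]
    field_simp
    rw [hsq]
  simp only [ofReal_gaussian_mul_cexp_eq]
  rw [fourierIntegral_gaussian (by norm_num),
    show (π : ℂ) / (1 / 2) = (2 * π : ℝ) by push_cast; ring, hcpow, hdensity]
  push_cast
  ring_nf

theorem norm_setIntegral_ofReal_mul_cexp_le (f : ℝ → ℝ) (s : Set ℝ) (x : ℝ) :
    ‖∫ k in s, (f k : ℂ) * cexp (-(I * k * x))‖ ≤ ∫ k in s, |f k| := by
  refine (norm_integral_le_integral_norm _).trans_eq (integral_congr_ae (ae_of_all _ fun k ↦ ?_))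
  simp [Complex.norm_exp]

theorem setIntegral_compl_Icc_gaussian_le {T : ℝ} (hT : 0 ≤ T) :
    ∫ k in (Set.Icc (-T) T)ᶜ, exp (-(k ^ 2 / 2)) ≤ 2 * √π * exp (-(T ^ 2 / 4)) := by
  have hpointwise : ∀ k ∈ (Set.Icc (-T) T)ᶜ,
      exp (-(k ^ 2 / 2)) ≤ exp (-(T ^ 2 / 4)) * exp (-(k ^ 2 / 4)) := by
    intro k hk
    have hTk : T ^ 2 ≤ k ^ 2 := by
      rw [Set.mem_compl_iff, Set.mem_Icc, not_and_or, not_le, not_le] at hk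
      rcases hk with h | h <;> nlinarith
    rw [← exp_add, exp_le_exp]
    linarith
  calc ∫ k in (Set.Icc (-T) T)ᶜ, exp (-(k ^ 2 / 2))
      ≤ ∫ k in (Set.Icc (-T) T)ᶜ, exp (-(T ^ 2 / 4)) * exp (-(k ^ 2 / 4)) :=
        setIntegral_mono_on (integrable_exp_neg_sq_div two_pos).integrableOn
          ((integrable_exp_neg_sq_div four_pos).const_mul _).integrableOn measurableSet_Icc.compl
          hpointwise
    _ ≤ ∫ k, exp (-(T ^ 2 / 4)) * exp (-(k ^ 2 / 4)) :=
        setIntegral_le_integral ((integrable_exp_neg_sq_div four_pos).const_mul _)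
          (ae_of_all _ fun _ ↦ by positivity)
    _ = 2 * √π * exp (-(T ^ 2 / 4)) := by
        rw [integral_const_mul, integral_exp_neg_sq_div_four, mul_comm]

theorem norm_setIntegral_Icc_sub_integral_gaussian_le {f : ℝ → ℝ} {T B : ℝ} (hT : 0 ≤ T)
    (hf : IntegrableOn f (Set.Icc (-T) T))
    (hB : ∀ k ∈ Set.Icc (-T) T, |f k - exp (-(k ^ 2 / 2))| ≤ B * exp (-(k ^ 2 / 4)))
    (x : ℝ) :
    ‖(∫ k in Set.Icc (-T) T, (f k : ℂ) * cexp (-(I * k * x))) -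
        ∫ k, (exp (-(k ^ 2 / 2)) : ℂ) * cexp (-(I * k * x))‖ ≤
      2 * √π * (B + exp (-(T ^ 2 / 4))) := by
  set s := Set.Icc (-T) T
  have hB0 : 0 ≤ B := by
    simpa using (abs_nonneg _).trans (hB 0 ⟨by linarith, hT⟩)
  have hg := integrable_gaussian_mul_cexp x
  have hfe : IntegrableOn (fun k : ℝ ↦ (f k : ℂ) * cexp (-(I * k * x))) s :=
    IntegrableOn.mul_continuousOn hf.ofReal (by fun_prop) isCompact_Icc
  have hsub : ∫ k in s, ((f k - exp (-(k ^ 2 / 2)) : ℝ) : ℂ) * cexp (-(I * k * x)) =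
      (∫ k in s, (f k : ℂ) * cexp (-(I * k * x))) -
        ∫ k in s, (exp (-(k ^ 2 / 2)) : ℂ) * cexp (-(I * k * x)) := by
    simp_rw [Complex.ofReal_sub, sub_mul]
    exact integral_sub hfe hg.integrableOn
  have hbulk : ∫ k in s, |f k - exp (-(k ^ 2 / 2))| ≤ 2 * √π * B :=
    calc ∫ k in s, |f k - exp (-(k ^ 2 / 2))|
        ≤ ∫ k in s, B * exp (-(k ^ 2 / 4)) :=
          setIntegral_mono_on (hf.sub (integrable_exp_neg_sq_div two_pos).integrableOn).abs
            ((integrable_exp_neg_sq_div four_pos).const_mul _).integrableOn measurableSet_Icc hB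
      _ ≤ ∫ k, B * exp (-(k ^ 2 / 4)) :=
          setIntegral_le_integral ((integrable_exp_neg_sq_div four_pos).const_mul _)
            (ae_of_all _ fun _ ↦ by positivity)
      _ = 2 * √π * B := by rw [integral_const_mul, integral_exp_neg_sq_div_four, mul_comm]
  have htail : ∫ k in sᶜ, |exp (-(k ^ 2 / 2))| ≤ 2 * √π * exp (-(T ^ 2 / 4)) := by
    simpa only [abs_of_pos (exp_pos _)] using setIntegral_compl_Icc_gaussian_le hT
  rw [← integral_add_compl measurableSet_Icc hg, ← sub_sub, ← hsub]
  calc _ ≤ ‖∫ k in s, ((f k - exp (-(k ^ 2 / 2)) : ℝ) : ℂ) * cexp (-(I * k * x))‖ +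
        ‖∫ k in sᶜ, (exp (-(k ^ 2 / 2)) : ℂ) * cexp (-(I * k * x))‖ :=
        norm_sub_le _ _
    _ ≤ 2 * √π * B + 2 * √π * exp (-(T ^ 2 / 4)) :=
        add_le_add ((norm_setIntegral_ofReal_mul_cexp_le _ _ x).trans hbulk)
          ((norm_setIntegral_ofReal_mul_cexp_le _ _ x).trans htail)
    _ = _ := by ring

theorem exists_exp_neg_mul_rpow_le_div {c δ : ℝ} (hc : 0 < c) (hδ : 0 < δ) :
    ∃ C > 0, ∀ x : ℝ, 1 ≤ x → exp (-(c * x ^ δ)) ≤ C / x := by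
  -- with `m = ⌈1/δ⌉` and `t = c x^δ`: `x ≤ x^{δm} = (t/c)^m ≤ m! eᵗ / cᵐ`
  set m := ⌈1 / δ⌉₊
  refine ⟨m.factorial / c ^ m, by positivity, fun x hx ↦ ?_⟩
  have hx0 : 0 < x := by linarith
  set t := c * x ^ δ
  have ht : 0 < t := by positivity
  have hδm : 1 ≤ δ * m := by
    rw [← div_le_iff₀' hδ]
    exact Nat.le_ceil _
  have hxt : x ≤ t ^ m / c ^ m := by
    rw [mul_pow, mul_div_cancel_left₀ _ (pow_ne_zero _ hc.ne'), ← rpow_mul_natCast hx0.le]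
    calc x = x ^ (1 : ℝ) := (rpow_one x).symm
      _ ≤ x ^ (δ * m) := rpow_le_rpow_of_exponent_le hx hδm
  have hexp : t ^ m ≤ m.factorial * exp t := by
    have := Real.pow_div_factorial_le_exp t ht.le m
    rwa [div_le_iff₀ (by positivity), mul_comm] at this
  rw [exp_neg, le_div_iff₀ hx0]
  calc (exp t)⁻¹ * x ≤ (exp t)⁻¹ * (t ^ m / c ^ m) := by gcongr
    _ ≤ (exp t)⁻¹ * (m.factorial * exp t / c ^ m) := by gcongr
    _ = m.factorial / c ^ m := by field_simp

theorem norm_truncated_fourier_inversion_sub_gaussDensity_le {n : ℕ} (hn : 0 < n) {T : ℝ}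
    (hT0 : 0 ≤ T) (hT : T ^ 2 ≤ 2 * n) (x : ℝ) :
    ‖1 / (2 * π) * (∫ k in Set.Icc (-T) T, ((sinc (k * √3 / √n) ^ n : ℝ) : ℂ) * cexp (-(I * k * x)))
        - gaussDensity x‖ ≤ (exp (1 / 2) * T ^ 4 / (8 * n) + exp (-(T ^ 2 / 4))) / √π := by
  have hbulk := norm_setIntegral_Icc_sub_integral_gaussian_le
    (f := fun k ↦ sinc (k * √3 / √n) ^ n) hT0
    ((Real.continuous_sinc.comp (by fun_prop)).pow n).integrableOn_Icc
    (fun k hk ↦ abs_sinc_pow_sub_gaussian_le hn hT hk) x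
  rw [gaussDensity_eq_integral, ← mul_sub, norm_mul,
    show (1 / (2 * π) : ℂ) = ((1 / (2 * π) : ℝ) : ℂ) by push_cast; rfl, Complex.norm_real,
    norm_of_nonneg (by positivity)]
  calc _ ≤ 1 / (2 * π) * (2 * √π * (exp (1 / 2) * T ^ 4 / (8 * n) + exp (-(T ^ 2 / 4)))) := by
        gcongr
    _ = _ := by
        field_simp
        rw [sq_sqrt pi_nonneg]

/-- Bulk (low-frequency) Fourier-inversion estimate from the proof of Lemma 3.1:
for `f̂_n(k) = sinc(k√3/√n)ⁿ` and every `ε ∈ (0, 1/4)`,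
`(1/2π) ∫_{|k| ≤ n^ε} f̂_n(k) e^{−ikx} dk = φ(x) + O(n^{−1+4ε})` uniformly in `x`. -/
theorem bulk_fourier_inversion_estimate :
    ∀ ε ∈ Set.Ioo (0 : ℝ) (1 / 4), ∃ C > 0, ∀ n : ℕ, 1 ≤ n → ∀ x : ℝ,
      ‖((1 / (2 * Real.pi)) *
          (∫ k in Set.Icc (-(n : ℝ) ^ ε) ((n : ℝ) ^ ε),
            ((sinc (k * Real.sqrt 3 / Real.sqrt n) ^ n : ℝ) : ℂ) *
              Complex.exp (-(Complex.I * k * x))) -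
          (gaussDensity x : ℂ))‖ ≤ C * (n : ℝ) ^ (-1 + 4 * ε) := by
  rintro ε ⟨hε0, hε4⟩
  obtain ⟨C, hC0, hC⟩ := exists_exp_neg_mul_rpow_le_div (c := 1 / 4) (δ := 2 * ε)
    (by norm_num) (by positivity)
  refine ⟨(exp (1 / 2) / 8 + C) / √π, by positivity, fun n hn x ↦ ?_⟩
  have hn1 : (1 : ℝ) ≤ n := by exact_mod_cast hn
  have hn0 : (0 : ℝ) < n := by linarith
  set T := (n : ℝ) ^ ε
  have hT2 : T ^ 2 = (n : ℝ) ^ (2 * ε) := by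
    rw [← rpow_mul_natCast hn0.le]
    ring_nf
  have hT4 : T ^ 4 / n = (n : ℝ) ^ (-1 + 4 * ε) := by
    rw [← rpow_mul_natCast hn0.le, rpow_add hn0, rpow_neg_one]
    ring_nf
  have hT2n : T ^ 2 ≤ 2 * n := by
    linarith [hT2 ▸ rpow_le_self_of_one_le hn1 (by linarith : 2 * ε ≤ 1)]
  have htail : exp (-(T ^ 2 / 4)) ≤ C * (n : ℝ) ^ (-1 + 4 * ε) := by
    calc exp (-(T ^ 2 / 4)) = exp (-(1 / 4 * (n : ℝ) ^ (2 * ε))) := by rw [hT2]; ring_nf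
      _ ≤ C * (n : ℝ) ^ (-1 : ℝ) := by rw [rpow_neg_one]; exact hC n hn1
      _ ≤ C * (n : ℝ) ^ (-1 + 4 * ε) := by gcongr; linarith
  calc _ ≤ (exp (1 / 2) / 8 * (T ^ 4 / n) + exp (-(T ^ 2 / 4))) / √π := by
        convert norm_truncated_fourier_inversion_sub_gaussDensity_le hn (by positivity) hT2n x
          using 3
        ring
    _ ≤ (exp (1 / 2) / 8 * (n : ℝ) ^ (-1 + 4 * ε) + C * (n : ℝ) ^ (-1 + 4 * ε)) / √π := by
        rw [hT4]
        gcongr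
    _ = _ := by ring
end

section
/- Let \widehat{f_n}(k) = (sinc(k√3/√n))^n for n ≥ 1 and real k, where sinc(u) = sin(u)/u for u ≠ 0 and sinc(0) = 1, and fix ε ∈ (0, 1/4). Then for all sufficiently large n, ∫_{n^ε ≤ |k| ≤ √n} |\widehat{f_n}(k)| dk ≤ 2·√n · e^{−n^{2ε}/2.1}. -/
/-!
With `u = k√3/√n`, the range `|k| ≤ √n` means `|u| ≤ √3 < π`, where `sinc` is nonnegative and
bounded by its Taylor polynomial `1 - u²/6 + u⁴/120`. This gives
`|sinc u| ≤ exp (-min (u²/6.3) (3/20))`, hence `|f̂_n(k)| ≤ exp (-min (k²/2.1) (3n/20))`.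
On the domain `k² ≥ n^{2ε}`, and `3n/20 ≥ n^{2ε}/2.1` for large `n` because `2ε < 1`, so the
integrand is at most `e^{-n^{2ε}/2.1}` on a set of measure at most `2√n`.
-/

open MeasureTheory Filter

theorem sinc_eq_real_sinc : sinc = Real.sinc := rfl

theorem le_of_hasDerivAt_le_of_nonneg {f g f' g' : ℝ → ℝ} (hf : ∀ x, HasDerivAt f (f' x) x)
    (hg : ∀ x, HasDerivAt g (g' x) x) (h₀ : f 0 ≤ g 0) (h' : ∀ x, 0 ≤ x → f' x ≤ g' x)
    {x : ℝ} (hx : 0 ≤ x) : f x ≤ g x := by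
  have hmono : MonotoneOn (g - f) (Set.Ici 0) := by
    refine monotoneOn_of_hasDerivWithinAt_nonneg (convex_Ici 0) (f' := g' - f') ?_
      (fun y _ ↦ ((hg y).sub (hf y)).hasDerivWithinAt) fun y hy ↦ ?_
    · exact (continuous_iff_continuousAt.2 fun y ↦ ((hg y).sub (hf y)).continuousAt).continuousOn
    · rw [interior_Ici] at hy
      exact sub_nonneg.2 (h' y hy.le)
  have := hmono Set.self_mem_Ici hx hx
  simp only [Pi.sub_apply] at this
  linarith

namespace Real

theorem cos_le_taylor_four {x : ℝ} (hx : 0 ≤ x) : cos x ≤ 1 - x ^ 2 / 2 + x ^ 4 / 24 := by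
  refine le_of_hasDerivAt_le_of_nonneg (g := fun x ↦ 1 - x ^ 2 / 2 + x ^ 4 / 24)
    (f' := fun x ↦ -sin x) (g' := fun x ↦ -x + x ^ 3 / 6) hasDerivAt_cos (fun y ↦ ?_) (by simp)
    (fun y hy ↦ by linarith [sin_ge_sub_cube hy]) hx
  have := (((hasDerivAt_pow 2 y).div_const 2).const_sub 1).add
    ((hasDerivAt_pow 4 y).div_const 24)
  exact this.congr_deriv (by norm_num; ring)

theorem sin_le_taylor_five {x : ℝ} (hx : 0 ≤ x) :
    sin x ≤ x - x ^ 3 / 6 + x ^ 5 / 120 := by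
  refine le_of_hasDerivAt_le_of_nonneg (g := fun x ↦ x - x ^ 3 / 6 + x ^ 5 / 120)
    (f' := cos) (g' := fun x ↦ 1 - x ^ 2 / 2 + x ^ 4 / 24) hasDerivAt_sin
    (fun y ↦ ?_) (by simp) (fun y hy ↦ cos_le_taylor_four hy) hx
  have := ((hasDerivAt_id y).sub ((hasDerivAt_pow 3 y).div_const 6)).add
    ((hasDerivAt_pow 5 y).div_const 120)
  exact this.congr_deriv (by norm_num; ring)

theorem sinc_le_taylor_four {x : ℝ} (hx : 0 ≤ x) : sinc x ≤ 1 - x ^ 2 / 6 + x ^ 4 / 120 := by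
  rcases hx.eq_or_lt with rfl | hx
  · simp
  rw [sinc_of_ne_zero hx.ne', div_le_iff₀ hx]
  nlinarith [sin_le_taylor_five hx.le]

theorem sinc_abs (x : ℝ) : sinc |x| = sinc x := by
  rcases abs_cases x with ⟨h, _⟩ | ⟨h, _⟩ <;> simp [h]

theorem sinc_nonneg {x : ℝ} (hx₀ : 0 ≤ x) (hxπ : x ≤ π) : 0 ≤ sinc x := by
  rcases hx₀.eq_or_lt with rfl | hx₀
  · simp
  rw [sinc_of_ne_zero hx₀.ne']
  exact div_nonneg (sin_nonneg_of_nonneg_of_le_pi hx₀.le hxπ) hx₀.le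

theorem sinc_le_exp {x : ℝ} (hx₀ : 0 ≤ x) (hx : x ≤ √3) :
    sinc x ≤ exp (-min (x ^ 2 / 6.3) (3 / 20)) := by
  have hsq : x ^ 2 ≤ 3 := by nlinarith [sq_sqrt (show (0 : ℝ) ≤ 3 by norm_num)]
  have htaylor := sinc_le_taylor_four hx₀
  -- Below `x² = 20/21` the quartic term costs at most `x²/126`; above it, `sinc x ≤ 0.85`.
  rcases le_total (x ^ 2) (20 / 21) with hsmall | hlarge
  · have hquartic : x ^ 4 ≤ 20 / 21 * x ^ 2 := by nlinarith [sq_nonneg x]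
    calc sinc x ≤ -(x ^ 2 / 6.3) + 1 := by norm_num; linarith
      _ ≤ exp (-(x ^ 2 / 6.3)) := add_one_le_exp _
      _ ≤ _ := exp_le_exp.2 (neg_le_neg (min_le_left _ _))
  · calc sinc x ≤ -(3 / 20) + 1 := by nlinarith
      _ ≤ exp (-(3 / 20)) := add_one_le_exp _
      _ ≤ _ := exp_le_exp.2 (neg_le_neg (min_le_right _ _))

theorem abs_sinc_le_exp {x : ℝ} (hx : |x| ≤ √3) :
    |sinc x| ≤ exp (-min (x ^ 2 / 6.3) (3 / 20)) := by
  have hπ : √3 ≤ π := by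
    nlinarith [pi_gt_three, sqrt_nonneg 3, sq_sqrt (show (0 : ℝ) ≤ 3 by norm_num)]
  rw [← sinc_abs, ← sq_abs, abs_of_nonneg (sinc_nonneg (abs_nonneg x) (hx.trans hπ))]
  exact sinc_le_exp (abs_nonneg x) hx

end Real

theorem abs_sinc_pow_le_exp {n : ℕ} (hn : 0 < n) {k : ℝ} (hk : |k| ≤ √n) :
    |sinc (k * √3 / √n) ^ n| ≤ Real.exp (-min (k ^ 2 / 2.1) (3 * (n : ℝ) / 20)) := by
  have hn' : (0 : ℝ) < n := Nat.cast_pos.2 hn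
  have hsqrt : 0 < √(n : ℝ) := Real.sqrt_pos.2 hn'
  set u := k * √3 / √n with hu_def
  have hu : |u| ≤ √3 := by
    rw [hu_def, abs_div, abs_mul, abs_of_pos hsqrt, abs_of_nonneg (Real.sqrt_nonneg 3),
      div_le_iff₀ hsqrt, mul_comm]
    exact mul_le_mul_of_nonneg_left hk (Real.sqrt_nonneg 3)
  have hnu : n * (u ^ 2 / 6.3) = k ^ 2 / 2.1 := by
    rw [hu_def, div_pow, mul_pow, Real.sq_sqrt (by norm_num), Real.sq_sqrt hn'.le]
    field_simp
    norm_num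
    ring
  calc |sinc u ^ n| = |Real.sinc u| ^ n := by rw [abs_pow, sinc_eq_real_sinc]
    _ ≤ Real.exp (-min (u ^ 2 / 6.3) (3 / 20)) ^ n :=
        pow_le_pow_left₀ (abs_nonneg _) (Real.abs_sinc_le_exp hu) n
    _ = Real.exp (-min (k ^ 2 / 2.1) (3 * (n : ℝ) / 20)) := by
        rw [← Real.exp_nat_mul, mul_neg, mul_min_of_nonneg _ _ hn'.le, hnu, mul_div_assoc',
          mul_comm (n : ℝ) 3]

theorem setIntegral_le_of_subset_Icc {f : ℝ → ℝ} {s : Set ℝ} {a C : ℝ} (ha : 0 ≤ a)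
    (hs : s ⊆ Set.Icc (-a) a) (hC : 0 ≤ C) (hf : ∀ x ∈ s, |f x| ≤ C) :
    ∫ x in s, f x ≤ 2 * a * C :=
  calc ∫ x in s, f x ≤ ‖∫ x in s, f x‖ := le_abs_self _
    _ ≤ C * volume.real s :=
        norm_setIntegral_le_of_norm_le_const ((measure_mono hs).trans_lt measure_Icc_lt_top) hf
    _ ≤ C * volume.real (Set.Icc (-a) a) :=
        mul_le_mul_of_nonneg_left (measureReal_mono hs measure_Icc_lt_top.ne) hC
    _ = 2 * a * C := by rw [Real.volume_real_Icc_of_le (by linarith)]; ring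

theorem eventually_rpow_le_const_mul {p c : ℝ} (hp : p < 1) (hc : 0 < c) :
    ∀ᶠ x : ℝ in atTop, x ^ p ≤ c * x := by
  filter_upwards [(tendsto_rpow_neg_atTop (sub_pos.2 hp)).eventually_le_const hc,
    eventually_gt_atTop 0] with x hx hx₀
  calc x ^ p = x ^ (-(1 - p)) * x := by rw [← Real.rpow_add_one hx₀.ne']; ring_nf
    _ ≤ c * x := by gcongr

/-- Intermediate-frequency bound from the proof of Lemma 3.1: with
`f̂_n(k) = sinc(k√3/√n)ⁿ` and `ε ∈ (0, 1/4)` fixed, for all sufficiently large `n`,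
`∫_{n^ε ≤ |k| ≤ √n} |f̂_n(k)| dk ≤ 2√n · e^{−n^{2ε}/2.1}`. -/
theorem intermediate_frequency_bound (ε : ℝ) (hε : ε ∈ Set.Ioo (0 : ℝ) (1 / 4)) :
    ∃ N : ℕ, ∀ n : ℕ, N ≤ n →
      (∫ k in {k : ℝ | (n : ℝ) ^ ε ≤ |k| ∧ |k| ≤ Real.sqrt n},
          |sinc (k * Real.sqrt 3 / Real.sqrt n) ^ n|) ≤
        2 * Real.sqrt n * Real.exp (-(n : ℝ) ^ (2 * ε) / 2.1) := by
  have hε₂ : 2 * ε < 1 := by linarith [hε.2]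
  -- `0.315 = 2.1 * 3/20`
  obtain ⟨N, hN⟩ := eventually_atTop.1 <|
    (tendsto_natCast_atTop_atTop.eventually (eventually_rpow_le_const_mul hε₂ (c := 0.315)
      (by norm_num))).and (eventually_gt_atTop 0)
  refine ⟨N, fun n hn ↦ setIntegral_le_of_subset_Icc (Real.sqrt_nonneg _)
    (fun k hk ↦ abs_le.1 hk.2) (Real.exp_pos _).le fun k ⟨hk₁, hk₂⟩ ↦ ?_⟩
  obtain ⟨hpow, hn₀⟩ := hN n hn
  have hk : (n : ℝ) ^ (2 * ε) ≤ k ^ 2 := by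
    rw [mul_comm, Real.rpow_mul (Nat.cast_nonneg n), Real.rpow_two, ← sq_abs k]
    exact pow_le_pow_left₀ (Real.rpow_nonneg (Nat.cast_nonneg n) ε) hk₁ 2
  rw [abs_abs]
  refine (abs_sinc_pow_le_exp hn₀ hk₂).trans (Real.exp_le_exp.2 ?_)
  rw [neg_div, neg_le_neg_iff, le_min_iff]
  constructor
  · gcongr
  · rw [div_le_iff₀ (by norm_num)]
    linarith
end
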